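/- Let R be a monotone transit function on a finite set X satisfying (uc). Then R satisfies (w) and (wp). -/
import Mathlib


variable {X : Type*}

/-- Transit function axioms (t1),(t2),(t3). -/
def IsTransit (R : X → X → Set X) : Prop :=
  (∀ u v, u ∈ R u v) ∧ (∀ u v, R u v = R v u) ∧ (∀ u, R u u = {u})

/-- Monotonicity axiom (m). -/
def AxM (R : X → X → Set X) : Prop :=
  ∀ u v p q, p ∈ R u v → q ∈ R u v → R p q ⊆ R u v

/-- Axiom (w). -/
def AxW (R : X → X → Set X) : Prop :=
  ∀ x y z, z ∈ R x y ∨ y ∈ R x z ∨ x ∈ R y z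

/-- Axiom (w₂). -/
def AxW2 (R : X → X → Set X) : Prop :=
  ∀ p q u v s t,
    R p q ∩ R u v ∩ R s t = R p q ∩ R u v ∨
    R p q ∩ R u v ∩ R s t = R p q ∩ R s t ∨
    R p q ∩ R u v ∩ R s t = R u v ∩ R s t

/-- Axiom (w₃). -/
def AxW3 (R : X → X → Set X) : Prop :=
  ∀ u v p q x y z, x ∈ R u v → x ∉ R p q → y ∈ R u v → y ∈ R p q →
    z ∈ R p q → z ∉ R u v → y ∈ R x z

/-- Axiom (x'). -/
def AxX' (R : X → X → Set X) : Prop :=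
  ∀ x y z, z ∉ R x y → R x y ⊆ R x z ∪ R z y

/-- Axiom (x). -/
def AxX (R : X → X → Set X) : Prop :=
  ∀ x y z, R x y ⊆ R x z ∪ R z y

/-- Axiom (u). -/
def AxU (R : X → X → Set X) : Prop :=
  ∀ x y z, z ∈ R x y → R x y = R x z ∪ R z y

/-- Axiom (mm). -/
def AxMM (R : X → X → Set X) : Prop :=
  ∀ x y u v, (R x y ∩ R u v).Nonempty →
    ∃ p ∈ R x y ∪ R u v, ∃ q ∈ R x y ∪ R u v, R x y ∪ R u v ⊆ R p q

/-- Axiom (uc). -/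
def AxUC (R : X → X → Set X) : Prop :=
  ∀ x y u v, (R x y ∩ R u v).Nonempty →
    ∃ p ∈ R x y ∪ R u v, ∃ q ∈ R x y ∪ R u v, R x y ∪ R u v = R p q

/-- Axiom (a'). -/
def AxA' (R : X → X → Set X) : Prop :=
  ∃ u v, R u v = Set.univ

/-- Axiom (k). -/
def AxK (R : X → X → Set X) : Prop :=
  ∀ u v x y, (R u v ∩ R x y).Nonempty → ∃ p q, R u v ∩ R x y = R p q

/-- Axiom (wp). -/
def AxWP (R : X → X → Set X) : Prop :=
  ∀ u v x y p q, (R u v ∩ R x y).Nonempty → (R u v ∩ R p q).Nonempty →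
    (R x y ∩ R p q).Nonempty →
    R p q ⊆ R u v ∪ R x y ∨ R u v ⊆ R p q ∪ R x y ∨ R x y ⊆ R p q ∪ R u v

/-- Axiom (o). -/
def AxO (R : X → X → Set X) : Prop :=
  ∀ u v, ∃ p ∈ R u v, ∃ q ∈ R u v, ∀ z ∈ R u v, R p z ∪ R z q = R u v

/-- Axiom (o'). -/
def AxO' (R : X → X → Set X) : Prop :=
  ∀ u v, ∀ z ∈ R u v, ∃ p ∈ R u v, ∃ q ∈ R u v, R p z ∪ R z q = R u v

/-- Weak hierarchy condition for a set system. -/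
def WeakHierarchy (𝒞 : Set (Set X)) : Prop :=
  ∀ A ∈ 𝒞, ∀ B ∈ 𝒞, ∀ C ∈ 𝒞,
    A ∩ B ∩ C = A ∩ B ∨ A ∩ B ∩ C = A ∩ C ∨ A ∩ B ∩ C = B ∩ C

lemma mem_right' {R : X → X → Set X} (hT : IsTransit R) (u v : X) : v ∈ R u v := by
  rw [hT.2.1]; exact hT.1 v u

lemma axU_of {R : X → X → Set X} (hT : IsTransit R) (hM : AxM R) (hUC : AxUC R) : AxU R := by
  intro x y z hz
  have hy : y ∈ R x y := mem_right' hT x y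
  have h1 : R x z ⊆ R x y := hM x y x z (hT.1 x y) hz
  have h2 : R z y ⊆ R x y := hM x y z y hz hy
  obtain ⟨p, hp, q, hq, heq⟩ := hUC x z z y ⟨z, mem_right' hT x z, hT.1 z y⟩
  have hp' : p ∈ R x y := by rcases hp with h | h; exacts [h1 h, h2 h]
  have hq' : q ∈ R x y := by rcases hq with h | h; exacts [h1 h, h2 h]
  have hsub1 : R p q ⊆ R x y := hM x y p q hp' hq'
  have hx' : x ∈ R p q := by rw [← heq]; exact Or.inl (hT.1 x z)
  have hy' : y ∈ R p q := by rw [← heq]; exact Or.inr (mem_right' hT z y)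
  have hsub2 : R x y ⊆ R p q := hM p q x y hx' hy'
  rw [Set.Subset.antisymm hsub2 hsub1, ← heq]

lemma core_w {R : X → X → Set X} [Finite X] (hT : IsTransit R) (hM : AxM R) (hUC : AxUC R)
    (x y z : X)
    (hz : z ∉ R x y) (hy : y ∉ R x z) (hx : x ∉ R y z)
    (hU : R x y ∪ R y z ≠ R x y ∪ R y z ∪ R x z)
    (IH : ∀ a b c : X, (R a b ∪ R b c ∪ R a c).ncard < (R x y ∪ R y z ∪ R x z).ncard →
      c ∈ R a b ∨ b ∈ R a c ∨ a ∈ R b c) : False := by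
  have hu := axU_of hT hM hUC
  have hUW : R x y ∪ R y z ⊆ R x y ∪ R y z ∪ R x z := Set.subset_union_left
  obtain ⟨s, hs, t, ht, hst⟩ := hUC x y y z ⟨y, mem_right' hT x y, hT.1 y z⟩
  -- inner claim
  have inner : ∀ s' t', R x y ∪ R y z = R s' t' → s' ∈ R x y → t' ∈ R y z → t' ∉ R x y →
      False := by
    intro s' t' hst' hs' ht'z ht'
    have hyU : y ∈ R s' t' := by rw [← hst']; exact Or.inl (mem_right' hT x y)
    have hdec := hu s' t' y hyU
    have hzU : z ∈ R s' t' := by rw [← hst']; exact Or.inr (mem_right' hT y z)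
    have hsy : R s' y ⊆ R x y := hM x y s' y hs' (mem_right' hT x y)
    have hz2 : z ∈ R s' y ∪ R y t' := by rw [← hdec]; exact hzU
    have hzyt : z ∈ R y t' := by
      rcases hz2 with h | h
      · exact absurd (hsy h) hz
      · exact h
    have hyt_sub : R y t' ⊆ R y z := hM y z y t' (hT.1 y z) ht'z
    have hxyt : x ∉ R y t' := fun h => hx (hyt_sub h)
    have hxU : x ∈ R s' t' := by rw [← hst']; exact Or.inl (hT.1 x y)
    have htU : t' ∈ R s' t' := mem_right' hT s' t'
    have hxt_sub : R x t' ⊆ R s' t' := hM s' t' x t' hxU htU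
    have hsubU : R x y ∪ R y t' ∪ R x t' ⊆ R x y ∪ R y z := by
      apply Set.union_subset (Set.union_subset _ _)
      · exact hxt_sub.trans hst'.symm.subset
      · exact Set.subset_union_left
      · exact hyt_sub.trans Set.subset_union_right
    have hUssW : R x y ∪ R y z ⊂ R x y ∪ R y z ∪ R x z :=
      Set.ssubset_iff_subset_ne.mpr ⟨hUW, hU⟩
    have hsmall : (R x y ∪ R y t' ∪ R x t').ncard < (R x y ∪ R y z ∪ R x z).ncard :=
      lt_of_le_of_lt (Set.ncard_le_ncard hsubU (Set.toFinite _))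
        (Set.ncard_lt_ncard hUssW (Set.toFinite _))
    rcases IH x y t' hsmall with h | h | h
    · exact ht' h
    · -- y ∈ R x t'
      have hyt'_sub : R y t' ⊆ R x t' := hM x t' y t' h (mem_right' hT x t')
      have hzxt : z ∈ R x t' := hyt'_sub hzyt
      have hxz_sub : R x z ⊆ R x t' := hM x t' x z (hT.1 x t') hzxt
      have hWU : R x y ∪ R y z ∪ R x z ⊆ R x y ∪ R y z :=
        Set.union_subset subset_rfl (hxz_sub.trans (hxt_sub.trans hst'.symm.subset))
      exact hU (Set.Subset.antisymm hUW hWU)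
    · exact hxyt h
  by_cases hsxy : s ∈ R x y
  · by_cases htxy : t ∈ R x y
    · have hsub : R x y ∪ R y z ⊆ R x y := by rw [hst]; exact hM x y s t hsxy htxy
      exact hz (hsub (Or.inr (mem_right' hT y z)))
    · have htyz : t ∈ R y z := ht.resolve_left htxy
      exact inner s t hst hsxy htyz htxy
  · have hsyz : s ∈ R y z := hs.resolve_left hsxy
    by_cases htxy : t ∈ R x y
    · exact inner t s (by rw [hst, hT.2.1 s t]) htxy hsyz hsxy
    · have htyz : t ∈ R y z := ht.resolve_left htxy
      have hsub : R x y ∪ R y z ⊆ R y z := by rw [hst]; exact hM y z s t hsyz htyz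
      exact hx (hsub (Or.inl (hT.1 x y)))

lemma pigeon {P1 P2 P3 Q1 Q2 Q3 : Prop} (h1 : P1 ∨ P2) (h2 : P1 ∨ P3) (h3 : P3 ∨ P2)
    (g1 : Q1 ∨ Q2) (g2 : Q1 ∨ Q3) (g3 : Q3 ∨ Q2)
    (n1 : ¬(P1 ∧ Q1)) (n2 : ¬(P2 ∧ Q2)) (n3 : ¬(P3 ∧ Q3)) : False := by tauto

lemma axW_of {R : X → X → Set X} [Finite X] (hT : IsTransit R) (hM : AxM R) (hUC : AxUC R) :
    AxW R := by
  have key : ∀ n : ℕ, ∀ x y z : X, (R x y ∪ R y z ∪ R x z).ncard ≤ n →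
      z ∈ R x y ∨ y ∈ R x z ∨ x ∈ R y z := by
    intro n
    induction n using Nat.strong_induction_on with
    | _ n IH =>
      intro x y z hn
      by_contra hcon
      push_neg at hcon
      obtain ⟨hz, hy, hx⟩ := hcon
      have IHW : ∀ a b c : X,
          (R a b ∪ R b c ∪ R a c).ncard < (R x y ∪ R y z ∪ R x z).ncard →
          c ∈ R a b ∨ b ∈ R a c ∨ a ∈ R b c :=
        fun a b c h => IH _ (lt_of_lt_of_le h hn) a b c le_rfl
      by_cases hU1 : R x y ∪ R y z = R x y ∪ R y z ∪ R x z
      case neg => exact core_w hT hM hUC x y z hz hy hx hU1 IHW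
      have e2 : R y x ∪ R x z ∪ R y z = R x y ∪ R y z ∪ R x z := by
        rw [hT.2.1 y x]; ext w; simp only [Set.mem_union]; tauto
      by_cases hU2 : R x y ∪ R x z = R x y ∪ R y z ∪ R x z
      case neg =>
        refine core_w hT hM hUC y x z (by rw [hT.2.1 y x]; exact hz) hx hy ?_
          (fun a b c h => IHW a b c (by rwa [e2] at h))
        rw [hT.2.1 y x, show R x y ∪ R x z ∪ R y z = R x y ∪ R y z ∪ R x z from by
          ext w; simp only [Set.mem_union]; tauto]
        exact hU2
      have e3 : R x z ∪ R z y ∪ R x y = R x y ∪ R y z ∪ R x z := by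
        rw [hT.2.1 z y]; ext w; simp only [Set.mem_union]; tauto
      by_cases hU3 : R x z ∪ R y z = R x y ∪ R y z ∪ R x z
      case neg =>
        refine core_w hT hM hUC x z y hy hz (by rw [hT.2.1 z y]; exact hx) ?_
          (fun a b c h => IHW a b c (by rwa [e3] at h))
        rw [hT.2.1 z y, show R x z ∪ R y z ∪ R x y = R x y ∪ R y z ∪ R x z from by
          ext w; simp only [Set.mem_union]; tauto]
        exact hU3
      -- all three pairwise unions equal W : pigeonhole contradiction
      obtain ⟨p, hp, q, hq, hpq⟩ := hUC x y x z ⟨x, hT.1 x y, hT.1 x z⟩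
      have hyin : y ∈ R p q := by rw [← hpq]; exact Or.inl (mem_right' hT x y)
      obtain ⟨a, ha, b, hb, hab⟩ := hUC p q y z ⟨y, hyin, hT.1 y z⟩
      have hWab : R x y ∪ R y z ∪ R x z = R a b := by
        rw [← hab, ← hpq]; ext w; simp only [Set.mem_union]; tauto
      have haW : a ∈ R x y ∪ R y z ∪ R x z := by rw [hWab, ← hab]; exact ha
      have hbW : b ∈ R x y ∪ R y z ∪ R x z := by rw [hWab, ← hab]; exact hb
      have hzW : z ∈ R x y ∪ R y z ∪ R x z := Or.inl (Or.inr (mem_right' hT y z))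
      have hxW : x ∈ R x y ∪ R y z ∪ R x z := Or.inl (Or.inl (hT.1 x y))
      have hyW : y ∈ R x y ∪ R y z ∪ R x z := Or.inl (Or.inl (mem_right' hT x y))
      have hab_xy : ¬(a ∈ R x y ∧ b ∈ R x y) := by
        rintro ⟨h1, h2⟩
        have hsub : R x y ∪ R y z ∪ R x z ⊆ R x y := by rw [hWab]; exact hM x y a b h1 h2
        exact hz (hsub hzW)
      have hab_yz : ¬(a ∈ R y z ∧ b ∈ R y z) := by
        rintro ⟨h1, h2⟩
        have hsub : R x y ∪ R y z ∪ R x z ⊆ R y z := by rw [hWab]; exact hM y z a b h1 h2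
        exact hx (hsub hxW)
      have hab_xz : ¬(a ∈ R x z ∧ b ∈ R x z) := by
        rintro ⟨h1, h2⟩
        have hsub : R x y ∪ R y z ∪ R x z ⊆ R x z := by rw [hWab]; exact hM x z a b h1 h2
        exact hy (hsub hyW)
      have haU1 : a ∈ R x y ∪ R y z := by rw [hU1]; exact haW
      have haU2 : a ∈ R x y ∪ R x z := by rw [hU2]; exact haW
      have haU3 : a ∈ R x z ∪ R y z := by rw [hU3]; exact haW
      have hbU1 : b ∈ R x y ∪ R y z := by rw [hU1]; exact hbW
      have hbU2 : b ∈ R x y ∪ R x z := by rw [hU2]; exact hbW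
      have hbU3 : b ∈ R x z ∪ R y z := by rw [hU3]; exact hbW
      simp only [Set.mem_union] at haU1 haU2 haU3 hbU1 hbU2 hbU3
      exact pigeon haU1 haU2 haU3 hbU1 hbU2 hbU3 hab_xy hab_yz hab_xz
  intro x y z
  exact key _ x y z le_rfl

lemma axWP_of {R : X → X → Set X} (hT : IsTransit R) (hM : AxM R) (hUC : AxUC R) : AxWP R := by
  have hu := axU_of hT hM hUC
  intro u v x y p q h1 h2 h3
  obtain ⟨s, hs, t, ht, hst⟩ := hUC u v x y h1
  have hint : (R s t ∩ R p q).Nonempty := by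
    obtain ⟨w, hw1, hw2⟩ := h3
    exact ⟨w, by rw [← hst]; exact Or.inr hw1, hw2⟩
  obtain ⟨e, he, f, hf, hef⟩ := hUC s t p q hint
  have hRef : R u v ∪ R x y ∪ R p q = R e f := by rw [← hef, hst]
  have heW : e ∈ R u v ∨ e ∈ R x y ∨ e ∈ R p q := by
    have h : e ∈ R u v ∪ R x y ∪ R p q := by rw [hRef, ← hef]; exact he
    simpa only [Set.mem_union, or_assoc] using h
  have hfW : f ∈ R u v ∨ f ∈ R x y ∨ f ∈ R p q := by
    have h : f ∈ R u v ∪ R x y ∪ R p q := by rw [hRef, ← hef]; exact hf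
    simpa only [Set.mem_union, or_assoc] using h
  have hA : R u v ⊆ R e f := by
    rw [← hRef]; exact fun w hw => Or.inl (Or.inl hw)
  have hB : R x y ⊆ R e f := by
    rw [← hRef]; exact fun w hw => Or.inl (Or.inr hw)
  have hC : R p q ⊆ R e f := by
    rw [← hRef]; exact fun w hw => Or.inr hw
  have mixed : ∀ a b c d : X, e ∈ R a b → f ∈ R c d → (R a b ∩ R c d).Nonempty →
      R a b ⊆ R e f → R u v ∪ R x y ∪ R p q ⊆ R a b ∪ R c d := by
    intro a b c d heI hfJ hne hsubI
    obtain ⟨w, hw1, hw2⟩ := hne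
    have hwef : w ∈ R e f := hsubI hw1
    rw [hRef, hu e f w hwef]
    exact Set.union_subset_union (hM a b e w heI hw1) (hM c d w f hw2 hfJ)
  have same : ∀ a b : X, e ∈ R a b → f ∈ R a b → R u v ∪ R x y ∪ R p q ⊆ R a b := by
    intro a b h1' h2'
    rw [hRef]; exact hM a b e f h1' h2'
  have h1s : (R x y ∩ R u v).Nonempty := by obtain ⟨w, hw1, hw2⟩ := h1; exact ⟨w, hw2, hw1⟩
  have h2s : (R p q ∩ R u v).Nonempty := by obtain ⟨w, hw1, hw2⟩ := h2; exact ⟨w, hw2, hw1⟩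
  have h3s : (R p q ∩ R x y).Nonempty := by obtain ⟨w, hw1, hw2⟩ := h3; exact ⟨w, hw2, hw1⟩
  rcases heW with heA | heB | heC <;> rcases hfW with hfA | hfB | hfC
  · exact Or.inl fun w hw => Or.inl (same u v heA hfA (Or.inr hw))
  · exact Or.inl fun w hw => mixed u v x y heA hfB h1 hA (Or.inr hw)
  · have H := mixed u v p q heA hfC h2 hA
    exact Or.inr (Or.inr fun w hw => ((H (Or.inl (Or.inr hw))).elim Or.inr Or.inl))
  · have H := mixed x y u v heB hfA h1s hB
    exact Or.inl fun w hw => (H (Or.inr hw)).elim Or.inr Or.inl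
  · exact Or.inl fun w hw => Or.inr (same x y heB hfB (Or.inr hw))
  · have H := mixed x y p q heB hfC h3 hB
    exact Or.inr (Or.inl fun w hw => (H (Or.inl (Or.inl hw))).elim Or.inr Or.inl)
  · have H := mixed p q u v heC hfA h2s hC
    exact Or.inr (Or.inr fun w hw => H (Or.inl (Or.inr hw)))
  · have H := mixed p q x y heC hfB h3s hC
    exact Or.inr (Or.inl fun w hw => H (Or.inl (Or.inl hw)))
  · exact Or.inr (Or.inl fun w hw => Or.inl (same p q heC hfC (Or.inl (Or.inl hw))))

theorem stmt14 {X : Type*} [Fintype X] (R : X → X → Set X)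
    (hT : IsTransit R) (hM : AxM R) (hUC : AxUC R) :
    AxW R ∧ AxWP R := ⟨axW_of hT hM hUC, axWP_of hT hM hUC⟩
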